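/- Let Γ=(G,σ) be a weighted signed graph and μ a measure on V. For any switching function θ : V → {+1,−1}, the signed Cheeger constant is switching invariant: h₁^σ(μ) = h₁^{σ^θ}(μ). -/
import Mathlib


open Finset Real

open scoped Classical

noncomputable section

namespace SignedGraph

variable {N : ℕ}

/-- The degree `d(u) = Σ_v w(u,v)` of a vertex. -/
def deg (w : Fin N → Fin N → ℝ) (u : Fin N) : ℝ := ∑ v, w u v

/-- Hypotheses making `(w, sgn)` a weighted signed graph: `w` is a symmetric nonnegative
weight function vanishing on the diagonal and `sgn` is a symmetric `±1`-valued signature. -/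
structure IsWSG {N : ℕ} (w : Fin N → Fin N → ℝ) (sgn : Fin N → Fin N → ℝ) : Prop where
  w_symm : ∀ u v, w u v = w v u
  w_nonneg : ∀ u v, 0 ≤ w u v
  w_loopless : ∀ u, w u u = 0
  sgn_symm : ∀ u v, sgn u v = sgn v u
  sgn_pm : ∀ u v, sgn u v = 1 ∨ sgn u v = -1

/-- The signature obtained from `sgn` by switching with the function `θ : V → {±1}`. -/
def switchSgn (sgn : Fin N → Fin N → ℝ) (θ : Fin N → ℝ) : Fin N → Fin N → ℝ :=
  fun u v => θ u * sgn u v * θ v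

/-- `|E(S,T)| = Σ_{u∈S, v∈T} w(u,v)`. -/
def EE (w : Fin N → Fin N → ℝ) (S T : Finset (Fin N)) : ℝ := ∑ u ∈ S, ∑ v ∈ T, w u v

/-- `|E⁺(S,T)|`: total weight of positive edges from `S` to `T`. -/
def Epos (w sgn : Fin N → Fin N → ℝ) (S T : Finset (Fin N)) : ℝ :=
  ∑ u ∈ S, ∑ v ∈ T, if sgn u v = 1 then w u v else 0

/-- `|E⁻(S,T)|`: total weight of negative edges from `S` to `T`. -/
def Eneg (w sgn : Fin N → Fin N → ℝ) (S T : Finset (Fin N)) : ℝ :=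
  ∑ u ∈ S, ∑ v ∈ T, if sgn u v = -1 then w u v else 0

/-- `vol_μ(S) = Σ_{u∈S} μ(u)`. -/
def vol (μ : Fin N → ℝ) (S : Finset (Fin N)) : ℝ := ∑ u ∈ S, μ u

/-- The signed bipartiteness ratio `β^σ(V₁,V₂)`. -/
def betaR (w sgn : Fin N → Fin N → ℝ) (μ : Fin N → ℝ) (V1 V2 : Finset (Fin N)) : ℝ :=
  (2 * Epos w sgn V1 V2 + Eneg w sgn V1 V1 + Eneg w sgn V2 V2 +
      EE w (V1 ∪ V2) (V1 ∪ V2)ᶜ) / vol μ (V1 ∪ V2)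

/-- The signed Cheeger constant `h₁^σ(μ)`: the minimum of `β^σ(V₁,V₂)` over all pairs of
disjoint subsets with nonempty union. -/
def h1 (w sgn : Fin N → Fin N → ℝ) (μ : Fin N → ℝ) : ℝ :=
  sInf {x | ∃ V1 V2 : Finset (Fin N),
    Disjoint V1 V2 ∧ (V1 ∪ V2).Nonempty ∧ x = betaR w sgn μ V1 V2}

/-- The numerator (minus boundary term) as a single double sum with signs via an indicator. -/
lemma num_eq (w sgn : Fin N → Fin N → ℝ)
    (hws : ∀ u v, w u v = w v u) (hss : ∀ u v, sgn u v = sgn v u)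
    (hsp : ∀ u v, sgn u v = 1 ∨ sgn u v = -1)
    (V1 V2 : Finset (Fin N)) (hd : Disjoint V1 V2) :
    2 * Epos w sgn V1 V2 + Eneg w sgn V1 V1 + Eneg w sgn V2 V2 =
      ∑ u ∈ V1 ∪ V2, ∑ v ∈ V1 ∪ V2,
        if sgn u v * (if u ∈ V1 then (1:ℝ) else -1) * (if v ∈ V1 then (1:ℝ) else -1) = -1
        then w u v else 0 := by
  have hsplit : ∀ f : Fin N → ℝ, ∑ u ∈ V1 ∪ V2, f u = ∑ u ∈ V1, f u + ∑ u ∈ V2, f u := by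
    intro f; exact Finset.sum_union hd
  rw [hsplit]
  have hin : ∀ f : Fin N → Fin N → ℝ, ∀ T : Finset (Fin N),
      ∑ u ∈ T, ∑ v ∈ V1 ∪ V2, f u v = ∑ u ∈ T, ∑ v ∈ V1, f u v + ∑ u ∈ T, ∑ v ∈ V2, f u v := by
    intro f T
    rw [← Finset.sum_add_distrib]
    exact Finset.sum_congr rfl fun u _ => hsplit _
  rw [hin, hin]
  have h11 : ∑ u ∈ V1, ∑ v ∈ V1,
      (if sgn u v * (if u ∈ V1 then (1:ℝ) else -1) * (if v ∈ V1 then (1:ℝ) else -1) = -1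
        then w u v else 0) = Eneg w sgn V1 V1 := by
    rw [Eneg]
    refine Finset.sum_congr rfl fun u hu => Finset.sum_congr rfl fun v hv => ?_
    rw [if_pos hu, if_pos hv]
    rcases hsp u v with h | h <;> rw [h] <;> norm_num
  have h12 : ∑ u ∈ V1, ∑ v ∈ V2,
      (if sgn u v * (if u ∈ V1 then (1:ℝ) else -1) * (if v ∈ V1 then (1:ℝ) else -1) = -1
        then w u v else 0) = Epos w sgn V1 V2 := by
    rw [Epos]
    refine Finset.sum_congr rfl fun u hu => Finset.sum_congr rfl fun v hv => ?_
    have hv' : v ∉ V1 := fun h => (Finset.disjoint_left.mp hd h) hv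
    rw [if_pos hu, if_neg hv']
    rcases hsp u v with h | h <;> rw [h] <;> norm_num
  have h21 : ∑ u ∈ V2, ∑ v ∈ V1,
      (if sgn u v * (if u ∈ V1 then (1:ℝ) else -1) * (if v ∈ V1 then (1:ℝ) else -1) = -1
        then w u v else 0) = Epos w sgn V1 V2 := by
    rw [Finset.sum_comm, Epos]
    refine Finset.sum_congr rfl fun v hv => Finset.sum_congr rfl fun u hu => ?_
    have hu' : u ∉ V1 := fun h => (Finset.disjoint_left.mp hd h) hu
    rw [if_pos hv, if_neg hu', hss u v, hws u v]
    rcases hsp v u with h | h <;> rw [h] <;> norm_num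
  have h22 : ∑ u ∈ V2, ∑ v ∈ V2,
      (if sgn u v * (if u ∈ V1 then (1:ℝ) else -1) * (if v ∈ V1 then (1:ℝ) else -1) = -1
        then w u v else 0) = Eneg w sgn V2 V2 := by
    rw [Eneg]
    refine Finset.sum_congr rfl fun u hu => Finset.sum_congr rfl fun v hv => ?_
    have hu' : u ∉ V1 := fun h => (Finset.disjoint_left.mp hd h) hu
    have hv' : v ∉ V1 := fun h => (Finset.disjoint_left.mp hd h) hv
    rw [if_neg hu', if_neg hv']
    rcases hsp u v with h | h <;> rw [h] <;> norm_num
  rw [h11, h12, h21, h22]; ring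

/-- Existence of a switched pair with the same bipartiteness ratio. -/
lemma beta_switch (w sgn : Fin N → Fin N → ℝ)
    (hws : ∀ u v, w u v = w v u) (hss : ∀ u v, sgn u v = sgn v u)
    (hsp : ∀ u v, sgn u v = 1 ∨ sgn u v = -1)
    (μ : Fin N → ℝ) (θ : Fin N → ℝ) (hθ : ∀ u, θ u = 1 ∨ θ u = -1)
    (V1 V2 : Finset (Fin N)) (hd : Disjoint V1 V2) :
    ∃ V1' V2' : Finset (Fin N), Disjoint V1' V2' ∧ V1' ∪ V2' = V1 ∪ V2 ∧
      betaR w (switchSgn sgn θ) μ V1' V2' = betaR w sgn μ V1 V2 := by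
  set S := V1 ∪ V2 with hS
  set ε : Fin N → ℝ := fun u => if u ∈ V1 then (1:ℝ) else -1 with hε
  refine ⟨S.filter (fun u => θ u * ε u = 1), S.filter (fun u => θ u * ε u = -1), ?_, ?_, ?_⟩
  · rw [Finset.disjoint_left]
    intro a ha hb
    have h1 := (Finset.mem_filter.mp ha).2
    have h2 := (Finset.mem_filter.mp hb).2
    rw [h1] at h2; norm_num at h2
  · ext a
    simp only [Finset.mem_union, Finset.mem_filter]
    constructor
    · rintro (⟨h, _⟩ | ⟨h, _⟩) <;> exact h
    · intro h
      rcases hθ a with h1 | h1 <;> rcases (ite_eq_or_eq (a ∈ V1) (1:ℝ) (-1)) with h2 | h2 <;>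
        simp only [hε, h1, h2] <;> norm_num <;> tauto
  · set V1' := S.filter (fun u => θ u * ε u = 1) with hV1'
    set V2' := S.filter (fun u => θ u * ε u = -1) with hV2'
    have hunion : V1' ∪ V2' = S := by
      ext a
      simp only [Finset.mem_union, Finset.mem_filter, hV1', hV2']
      constructor
      · rintro (⟨h, _⟩ | ⟨h, _⟩) <;> exact h
      · intro h
        rcases hθ a with h1 | h1 <;> rcases (ite_eq_or_eq (a ∈ V1) (1:ℝ) (-1)) with h2 | h2 <;>
          simp only [hε, h1, h2] <;> norm_num <;> tauto
    have hd' : Disjoint V1' V2' := by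
      rw [Finset.disjoint_left]
      intro a ha hb
      have h1 := (Finset.mem_filter.mp ha).2
      have h2 := (Finset.mem_filter.mp hb).2
      rw [h1] at h2; norm_num at h2
    have hss' : ∀ u v, switchSgn sgn θ u v = switchSgn sgn θ v u := by
      intro u v; simp only [switchSgn]; rw [hss u v]; ring
    have hsp' : ∀ u v, switchSgn sgn θ u v = 1 ∨ switchSgn sgn θ u v = -1 := by
      intro u v; simp only [switchSgn]
      rcases hθ u with h1 | h1 <;> rcases hθ v with h2 | h2 <;>
        rcases hsp u v with h3 | h3 <;> rw [h1, h2, h3] <;> norm_num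
    unfold betaR
    rw [hunion]
    congr 2
    rw [num_eq w sgn hws hss hsp V1 V2 hd,
      num_eq w (switchSgn sgn θ) hws hss' hsp' V1' V2' hd', hunion]
    refine Finset.sum_congr rfl fun u hu => Finset.sum_congr rfl fun v hv => ?_
    have key : ∀ a, a ∈ S → (if a ∈ V1' then (1:ℝ) else -1) = θ a * ε a := by
      intro a ha
      by_cases h : a ∈ V1'
      · rw [if_pos h]; exact ((Finset.mem_filter.mp h).2).symm
      · rw [if_neg h]
        have : a ∈ V2' := by
          have := hunion ▸ ha
          rcases Finset.mem_union.mp this with h' | h'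
          · exact absurd h' h
          · exact h'
        exact ((Finset.mem_filter.mp this).2).symm
    rw [key u hu, key v hv]
    have hprod : switchSgn sgn θ u v * (θ u * ε u) * (θ v * ε v)
        = sgn u v * ε u * ε v := by
      simp only [switchSgn]
      rcases hθ u with h1 | h1 <;> rcases hθ v with h2 | h2 <;> rw [h1, h2] <;> ring
    rw [hprod]

lemma switch_switch (sgn : Fin N → Fin N → ℝ) (θ : Fin N → ℝ)
    (hθ : ∀ u, θ u = 1 ∨ θ u = -1) :
    switchSgn (switchSgn sgn θ) θ = sgn := by
  funext u v
  simp only [switchSgn]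
  rcases hθ u with h1 | h1 <;> rcases hθ v with h2 | h2 <;> rw [h1, h2] <;> ring

/-- The signed Cheeger constant is switching invariant:
`h₁^σ(μ) = h₁^{σ^θ}(μ)`. -/
theorem h1_switching_invariant {N : ℕ} (w sgn : Fin N → Fin N → ℝ) (hG : IsWSG w sgn)
    (μ : Fin N → ℝ) (hμ : ∀ u, 0 < μ u)
    (θ : Fin N → ℝ) (hθ : ∀ u, θ u = 1 ∨ θ u = -1) :
    h1 w sgn μ = h1 w (switchSgn sgn θ) μ := by
  obtain ⟨hws, _, _, hss, hsp⟩ := hG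
  have hss' : ∀ u v, switchSgn sgn θ u v = switchSgn sgn θ v u := by
    intro u v; simp only [switchSgn]; rw [hss u v]; ring
  have hsp' : ∀ u v, switchSgn sgn θ u v = 1 ∨ switchSgn sgn θ u v = -1 := by
    intro u v; simp only [switchSgn]
    rcases hθ u with h1 | h1 <;> rcases hθ v with h2 | h2 <;>
      rcases hsp u v with h3 | h3 <;> rw [h1, h2, h3] <;> norm_num
  unfold h1
  congr 1
  ext x
  constructor
  · rintro ⟨V1, V2, hd, hne, rfl⟩
    obtain ⟨V1', V2', hd', hu', heq⟩ := beta_switch w sgn hws hss hsp μ θ hθ V1 V2 hd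
    exact ⟨V1', V2', hd', hu' ▸ hne, heq.symm⟩
  · rintro ⟨V1, V2, hd, hne, rfl⟩
    obtain ⟨V1', V2', hd', hu', heq⟩ :=
      beta_switch w (switchSgn sgn θ) hws hss' hsp' μ θ hθ V1 V2 hd
    rw [switch_switch sgn θ hθ] at heq
    exact ⟨V1', V2', hd', hu' ▸ hne, heq.symm⟩

end SignedGraph
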